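/- Let D be a minimally rich domain that is connected with two distinct neighbours, and f: D^2 → A unanimous, tops-only, and locally strategy-proof. Then for every alternative a, either voter 1 or voter 2 is decisive over a; consequently one voter is decisive over all alternatives, i.e., f is dictatorial. -/

import Mathlib

open Relation

/-- A preference is a ranking: a bijection from alternatives to ranks (0 = best). -/
abbrev Pref (A : Type*) [Fintype A] := A ≃ Fin (Fintype.card A)

namespace Pref

variable {A : Type*} [Fintype A]

/-- The rank (as a natural number, 0 = best) of alternative `a` in preference `P`. -/
def rk (P : Pref A) (a : A) : ℕ := (P a : ℕ)

/-- The top-ranked alternative of `P`. -/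
noncomputable def top [Nonempty A] (P : Pref A) : A := P.symm ⟨0, Fintype.card_pos⟩

/-- `a` is strictly preferred to `b` under `P`. -/
def SPrefers (P : Pref A) (a b : A) : Prop := rk P a < rk P b

/-- Two preferences are adjacent if they differ by one swap of consecutively
ranked alternatives. -/
def Adjacent (P P' : Pref A) : Prop :=
  ∃ a b : A, rk P a = rk P b + 1 ∧ rk P' a = rk P b ∧ rk P' b = rk P a ∧
    ∀ c : A, c ≠ a → c ≠ b → rk P c = rk P' c

end Pref

open Pref

variable {A : Type*} [Fintype A] [Nonempty A]

/-- One step between members of the domain `D` along adjacent preferences. -/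
def StepRel (D : Set (Pref A)) (P Q : Pref A) : Prop := P ∈ D ∧ Q ∈ D ∧ Adjacent P Q

/-- The domain `D` is connected: any two members are joined by a path of
adjacent preferences inside `D`. -/
def DConnected (D : Set (Pref A)) : Prop :=
  ∀ P ∈ D, ∀ Q ∈ D, ReflTransGen (StepRel D) P Q

/-- One step inside `D` along adjacent preferences keeping the same top. -/
def TStepRel (D : Set (Pref A)) (P Q : Pref A) : Prop :=
  StepRel D P Q ∧ Pref.top P = Pref.top Q

/-- The top-connected closure of `P` in `D`. -/
def TCC (D : Set (Pref A)) (P : Pref A) : Set (Pref A) :=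
  {Q | ReflTransGen (TStepRel D) P Q}

/-- Neighbours of a subset `S` inside the domain `D`. -/
def Nbr (D S : Set (Pref A)) : Set (Pref A) :=
  {Q | Q ∈ D ∧ Q ∉ S ∧ ∃ P ∈ S, Adjacent P Q}

/-- `D` is connected with two distinct neighbours. -/
def CDN (D : Set (Pref A)) : Prop :=
  DConnected D ∧
    ∀ P ∈ D, ∃ Q ∈ Nbr D (TCC D P), ∃ R ∈ Nbr D (TCC D P), Pref.top Q ≠ Pref.top R

/-- Every alternative is top-ranked in some preference of `D`. -/
def MinimallyRich (D : Set (Pref A)) : Prop := ∀ a : A, ∃ P ∈ D, Pref.top P = a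

/-- The edge relation of the induced graph `G(D)` on alternatives. -/
def EdgeD (D : Set (Pref A)) (a b : A) : Prop :=
  ∃ P ∈ D, ∃ P' ∈ D, Adjacent P P' ∧
    Pref.top P = a ∧ Pref.top P' = b ∧ rk P b = 1 ∧ rk P' a = 1

/-- `v 0, v 1, …, v (k-1)` is a path in the induced graph `G(D)`. -/
def IsPathD (D : Set (Pref A)) (k : ℕ) (v : ℕ → A) : Prop :=
  (∀ i j, i < k → j < k → v i = v j → i = j) ∧
    ∀ i, i + 1 < k → EdgeD D (v i) (v (i + 1))

/-- Connected component of `P` in `D`. -/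
def Component (D : Set (Pref A)) (P : Pref A) : Set (Pref A) :=
  {Q | Q ∈ D ∧ ReflTransGen (StepRel D) P Q}

section SCF

variable {n : ℕ} (D : Set (Pref A))

/-- Unanimity. -/
def Unanimous (f : (Fin n → D) → A) : Prop :=
  ∀ (P : Fin n → D) (a : A), (∀ i, Pref.top (P i : Pref A) = a) → f P = a

/-- Local strategy-proofness. -/
def LocallySP (f : (Fin n → D) → A) : Prop :=
  ∀ (P : Fin n → D) (i : Fin n) (Q : D), Adjacent (P i : Pref A) (Q : Pref A) →
    ¬ SPrefers (P i : Pref A) (f (Function.update P i Q)) (f P)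

/-- (Global) strategy-proofness. -/
def StrategyProof (f : (Fin n → D) → A) : Prop :=
  ∀ (P : Fin n → D) (i : Fin n) (Q : D),
    ¬ SPrefers (P i : Pref A) (f (Function.update P i Q)) (f P)

/-- Tops-onlyness. -/
def TopsOnly (f : (Fin n → D) → A) : Prop :=
  ∀ P P' : Fin n → D,
    (∀ i, Pref.top (P i : Pref A) = Pref.top (P' i : Pref A)) → f P = f P'

/-- Dictatorship. -/
def Dictatorial (f : (Fin n → D) → A) : Prop :=
  ∃ i : Fin n, ∀ P : Fin n → D, f P = Pref.top (P i : Pref A)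

/-- Voter `i` is decisive over `a`. -/
def Decisive (f : (Fin n → D) → A) (i : Fin n) (a : A) : Prop :=
  ∀ P : Fin n → D, Pref.top (P i : Pref A) = a → f P = a

end SCF

set_option linter.unusedSectionVars false
set_option linter.unusedSectionVars false

namespace Stmt12Core

variable {V : Type*} [Fintype V]

/-- Equal-or-edge relation. -/
def EOE (E : V → V → Prop) (x y : V) : Prop := x = y ∨ E x y

/-- Connected component of `p` in the graph minus vertex `q`. -/
def CComp (E : V → V → Prop) (q p : V) : Set V :=
  {x | ReflTransGen (fun a b => E a b ∧ a ≠ q ∧ b ≠ q) p x}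

structure CoreHyp (E : V → V → Prop) (g : V → V → V) : Prop where
  symm : ∀ a b, E a b → E b a
  ne : ∀ a b, E a b → a ≠ b
  diag : ∀ a, g a a = a
  p2a : ∀ s s' t, E s s' → g s t ≠ g s' t → g s t = s ∧ g s' t = s'
  p2b : ∀ s t t', E t t' → g s t ≠ g s t' → g s t = t ∧ g s t' = t'
  conn : ∀ a b, ReflTransGen (EOE E) a b
  deg : ∀ a, ∃ b c, b ≠ c ∧ E a b ∧ E a c

variable {E : V → V → Prop} {g : V → V → V}

lemma CoreHyp.transpose (H : CoreHyp E g) : CoreHyp E (fun x y => g y x) where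
  symm := H.symm
  ne := H.ne
  diag := H.diag
  p2a := fun s s' t h hne => H.p2b t s s' h hne
  p2b := fun s t t' h hne => H.p2a t t' s h hne
  conn := H.conn
  deg := H.deg

/-- value in an edge's pair -/
lemma nbr_val (H : CoreHyp E g) {x s : V} (h : E x s) : g x s = x ∨ g x s = s := by
  by_cases hgg : g x x = g x s
  · left; rw [← hgg, H.diag]
  · right; exact (H.p2b x x s h hgg).2

lemma Qspread (H : CoreHyp E g) {u t z : V} (hut : E u t) (hQ : g u t = u)
    (htz : E t z) (hzu : z ≠ u) : g t z = t := by
  have hunz : g u z = u := by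
    by_cases h' : g u t = g u z
    · rw [← h', hQ]
    · exact absurd ((H.p2b u t z htz h').1.symm.trans hQ) (H.ne u t hut).symm
  have hnbr := nbr_val H htz
  have hne : g u z ≠ g t z := by
    rw [hunz]
    rcases hnbr with h | h <;> rw [h]
    · exact H.ne u t hut
    · exact fun h' => hzu h'.symm
  exact (H.p2a u t z hut hne).2

lemma Wspread (H : CoreHyp E g) {s y x : V} (hsy : E s y) (hW : g s y = y)
    (hxs : E x s) (hxy : x ≠ y) : g x s = s :=
  Qspread H.transpose (H.symm _ _ hsy) hW (H.symm _ _ hxs) hxy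

/-- row value `u` spreads within components avoiding `u`. -/
lemma rowspread (H : CoreHyp E g) {u v x : V} (hv : g u v = u) (hvu : v ≠ u)
    (hx : x ∈ CComp E u v) : g u x = u := by
  induction hx with
  | refl => exact hv
  | tail _ hstep ih =>
    rename_i b c _
    by_cases h' : g u b = g u c
    · rw [← h', ih]
    · exact absurd ((H.p2b u b c hstep.1 h').1.symm.trans ih) hstep.2.1

lemma ccomp_ne (H : CoreHyp E g) {q p x : V} (hpq : p ≠ q) (hx : x ∈ CComp E q p) :
    x ≠ q := by
  induction hx with
  | refl => exact hpq
  | tail _ hstep _ => exact hstep.2.2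

lemma ccomp_symm {q p x : V} (hE : ∀ a b, E a b → E b a) (hx : x ∈ CComp E q p) :
    p ∈ CComp E q x := by
  have hsymm : Symmetric (fun a b => E a b ∧ a ≠ q ∧ b ≠ q) :=
    fun a b h => ⟨hE a b h.1, h.2.2, h.2.1⟩
  exact (@ReflTransGen.symmetric _ _ ⟨hsymm⟩).symm _ _ hx

/-- component growth along the pattern walk -/
lemma ccomp_grow (H : CoreHyp E g) {p q r : V} (hqp : E q p) (hqr : E q r)
    (hrp : r ≠ p) (hr : r ∉ CComp E q p) :
    insert q (CComp E q p) ⊆ CComp E r q := by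
  intro x hx
  rcases hx with rfl | hx
  · exact ReflTransGen.refl
  · induction hx with
    | refl =>
      exact ReflTransGen.single ⟨hqp, H.ne q r hqr, fun h => hrp h.symm⟩
    | tail hb hstep ih =>
      rename_i b c _
      refine ReflTransGen.tail ih ⟨hstep.1, ?_, ?_⟩
      · exact fun h => hr (h ▸ hb)
      · exact fun h => hr (h ▸ (ReflTransGen.tail hb hstep))

lemma q_not_mem_ccomp (H : CoreHyp E g) {q p : V} (hpq : p ≠ q) :
    q ∉ CComp E q p := fun h => (ccomp_ne H hpq h) rfl

/-- The key impossibility: no edge can be won "both ways" by the same vertex. -/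
lemma no_pattern (H : CoreHyp E g) :
    ∀ (k : ℕ) (p q : V), Fintype.card V - (CComp E q p).ncard ≤ k →
      E p q → g p q = p → g q p = p → False := by
  intro k
  induction k with
  | zero =>
    intro p q hm hpq _ _
    have hle : Fintype.card V ≤ (CComp E q p).ncard := by omega
    have hsub : CComp E q p ⊆ Set.univ := Set.subset_univ _
    have : CComp E q p = Set.univ := by
      apply Set.eq_of_subset_of_ncard_le (Set.Subset.rfl.trans hsub) ?_ (Set.toFinite _)
      · rwa [Set.ncard_univ, Nat.card_eq_fintype_card]
    exact q_not_mem_ccomp H (H.ne p q hpq) (this ▸ Set.mem_univ q)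
  | succ k ih =>
    intro p q hm hpq hQ hW
    have hqp : E q p := H.symm _ _ hpq
    obtain ⟨b, c, hbc, hqb, hqc⟩ := H.deg q
    -- choose a neighbour r of q with r ≠ p
    obtain ⟨r, hqr, hrp⟩ : ∃ r, E q r ∧ r ≠ p := by
      by_cases hb : b = p
      · exact ⟨c, hqc, fun h => hbc (hb.trans h.symm)⟩
      · exact ⟨b, hqb, hb⟩
    -- pattern propagates to (q, r)
    have hQ' : g q r = q := Qspread H hpq hQ hqr hrp
    have hW' : g r q = q := Wspread H hqp hW (H.symm _ _ hqr) hrp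
    by_cases hmem : p ∈ CComp E q r
    · -- direct contradiction: row q constant on the component of r
      have : g q p = q := rowspread H hQ' (H.ne q r hqr).symm hmem
      exact (H.ne p q hpq) (hW.symm.trans this)
    · -- recurse with strictly larger component
      have hrnot : r ∉ CComp E q p := fun h => hmem (ccomp_symm H.symm h)
      have hsub := ccomp_grow H hqp hqr hrp hrnot
      have hq_not := q_not_mem_ccomp H (H.ne p q hpq)
      have hcard : (CComp E q p).ncard < (CComp E r q).ncard := by
        calc (CComp E q p).ncard < (insert q (CComp E q p)).ncard := by
              rw [Set.ncard_insert_of_notMem hq_not (Set.toFinite _)]; omega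
          _ ≤ (CComp E r q).ncard := Set.ncard_le_ncard hsub (Set.toFinite _)
      have hbound : (CComp E r q).ncard ≤ Fintype.card V := by
        rw [← Nat.card_eq_fintype_card, ← Set.ncard_univ]
        exact Set.ncard_le_ncard (Set.subset_univ _) (Set.toFinite _)
      exact ih q r (by omega) hqr hQ' hW'

lemma noQW (H : CoreHyp E g) {u t t' : V} (hut : E u t) (hut' : E u t')
    (htt' : t ≠ t') (hQ : g u t = u) (hW : g u t' = t') : False := by
  have hWtu : g t u = u := Wspread H hut' hW (H.symm _ _ hut) htt'
  exact no_pattern H (Fintype.card V) u t (by omega) hut hQ hWtu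

lemma rowAll (H : CoreHyp E g) {u t : V} (hut : E u t) (hQ : g u t = u) :
    ∀ x, g u x = u := by
  have key : ∀ x, ReflTransGen (EOE E) u x → g u x = u := by
    intro x hx
    induction hx with
    | refl => exact H.diag u
    | tail _ hstep ih =>
      rename_i b c _
      rcases hstep with rfl | hbc
      · exact ih
      · by_cases h' : g u b = g u c
        · rw [← h', ih]
        · obtain ⟨h1, h2⟩ := H.p2b u b c hbc h'
          have hbu : b = u := by rw [← ih, h1]
          have hbc' : E u c := hbu ▸ hbc
          have hct : t ≠ c := by
            intro h
            have h2' : g u t = t := by rw [h]; exact h2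
            exact H.ne u t hut (hQ.symm.trans h2')
          exact (noQW H hut hbc' hct hQ h2).elim
  exact fun x => key x (H.conn u x)

lemma dict0 (H : CoreHyp E g) {u t : V} (hut : E u t) (hQ : g u t = u) :
    ∀ s x, g s x = s := by
  have key : ∀ s, ReflTransGen (EOE E) u s → ∀ x, g s x = s := by
    intro s hs
    induction hs with
    | refl => exact rowAll H hut hQ
    | tail _ hstep ih =>
      rename_i b c _
      rcases hstep with rfl | hbc
      · exact ih
      · -- row b constant, so g b c = b; propagate to row c
        have hQbc : g b c = b := ih c
        obtain ⟨z₁, z₂, hz, hcz₁, hcz₂⟩ := H.deg c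
        obtain ⟨z, hcz, hzb⟩ : ∃ z, E c z ∧ z ≠ b := by
          by_cases h1 : z₁ = b
          · exact ⟨z₂, hcz₂, fun h => hz (h1.trans h.symm)⟩
          · exact ⟨z₁, hcz₁, h1⟩
        have : g c z = c := Qspread H hbc hQbc hcz hzb
        exact rowAll H hcz this
  exact fun s => key s (H.conn u s)

/-- The combinatorial core: `g` is dictatorial. -/
theorem core_dict [Nonempty V] (H : CoreHyp E g) :
    (∀ s t, g s t = s) ∨ (∀ s t, g s t = t) := by
  obtain ⟨a⟩ := ‹Nonempty V›
  obtain ⟨b, c, _, hab, _⟩ := H.deg a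
  rcases nbr_val H hab with h | h
  · exact Or.inl (dict0 H hab h)
  · right
    intro s t
    exact dict0 H.transpose (H.symm _ _ hab) h t s

end Stmt12Core

namespace Stmt12Pref

open Pref Stmt12Core

variable {A : Type*} [Fintype A] [Nonempty A]

lemma rk_inj {P : Pref A} {x y : A} (h : rk P x = rk P y) : x = y :=
  P.injective (Fin.ext h)

lemma top_eq_iff {P : Pref A} {a : A} : Pref.top P = a ↔ rk P a = 0 := by
  unfold Pref.top Pref.rk
  rw [Equiv.symm_apply_eq]
  constructor
  · intro h; rw [← h]
  · intro h; exact (Fin.ext h.symm)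

lemma adj_symm {P Q : Pref A} (h : Adjacent P Q) : Adjacent Q P := by
  obtain ⟨a, b, h1, h2, h3, h4⟩ := h
  refine ⟨b, a, ?_, ?_, ?_, fun c hcb hca => (h4 c hca hcb).symm⟩
  · rw [h3, h2, h1]
  · rw [h2]
  · rw [h3]

lemma topswap {P P' : Pref A} {a b x z : A} (hadj : Adjacent P P')
    (ha0 : rk P a = 0) (hb1 : rk P b = 1) (hb0 : rk P' b = 0) (ha1 : rk P' a = 1)
    (hxz : x ≠ z) (h1 : rk P x ≤ rk P z) (h2 : rk P' z ≤ rk P' x) :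
    x = a ∧ z = b := by
  obtain ⟨c, d, hc1, hc2, hc3, hoth⟩ := hadj
  have hab : a ≠ b := fun h => by rw [h, hb1] at ha0; exact absurd ha0 one_ne_zero
  have had : a = d := by
    by_cases hac : a = c
    · subst hac; omega
    · by_cases had : a = d
      · exact had
      · rw [hoth a hac had] at ha0; omega
  have hbc : b = c := by
    by_cases hbd : b = d
    · exact absurd (hbd.trans had.symm) hab.symm
    · by_cases hbc : b = c
      · exact hbc
      · rw [hoth b hbc hbd] at hb1; omega
  subst had; subst hbc
  -- now: rk P b = rk P a + 1, rk P' b = rk P a, rk P' a = rk P b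
  by_cases hxa : x = a
  · subst hxa
    refine ⟨rfl, ?_⟩
    by_contra hzb
    have hza : z ≠ x := fun h => hxz h.symm
    have hz' : rk P z = rk P' z := hoth z hzb hza
    have hz0 : rk P z ≠ 0 := fun h => hza (rk_inj (h.trans ha0.symm))
    have hz1 : rk P z ≠ 1 := fun h => hzb (rk_inj (h.trans hb1.symm))
    omega
  · exfalso
    by_cases hxb : x = b
    · subst hxb
      have : rk P' z = 0 := by omega
      exact hxz (rk_inj (A := A) (P := P') (hb0.trans this.symm))
    · have hx' : rk P x = rk P' x := hoth x hxb hxa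
      by_cases hza : z = a
      · subst hza
        have : rk P x = 0 := by omega
        exact hxa (rk_inj (this.trans ha0.symm))
      · by_cases hzb : z = b
        · subst hzb
          have hx0 : rk P x ≠ 0 := fun h => hxa (rk_inj (h.trans ha0.symm))
          have hx1 : rk P x ≠ 1 := fun h => hxb (rk_inj (h.trans hb1.symm))
          omega
        · have hz' : rk P z = rk P' z := hoth z hzb hza
          exact hxz (rk_inj (A := A) (P := P) (by omega))

lemma adj_difftop {P Q : Pref A} (hadj : Adjacent P Q)
    (hne : Pref.top P ≠ Pref.top Q) :
    rk P (Pref.top Q) = 1 ∧ rk Q (Pref.top P) = 1 := by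
  obtain ⟨c, d, hc1, hc2, hc3, hoth⟩ := hadj
  have ha0 : rk P (Pref.top P) = 0 := top_eq_iff.mp rfl
  have hb0 : rk Q (Pref.top Q) = 0 := top_eq_iff.mp rfl
  set a := Pref.top P with hadef
  set b := Pref.top Q with hbdef
  have had : a = d := by
    by_cases hac : a = c
    · subst hac; omega
    · by_cases had : a = d
      · exact had
      · exfalso
        have := hoth a hac had
        exact hne (top_eq_iff.mpr (by omega)).symm
  have hbc : b = c := by
    by_cases hbd : b = d
    · exact absurd (hbd.trans had.symm).symm hne
    · by_cases hbc : b = c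
      · exact hbc
      · exfalso
        have := hoth b hbc hbd
        have : rk P b = 0 := by omega
        exact hne (top_eq_iff.mpr this)
  subst had; subst hbc
  omega

variable {D : Set (Pref A)}

lemma edge_symm {a b : A} (h : EdgeD D a b) : EdgeD D b a := by
  obtain ⟨P, hP, P', hP', hadj, h1, h2, h3, h4⟩ := h
  exact ⟨P', hP', P, hP, adj_symm hadj, h2, h1, h4, h3⟩

lemma edge_ne {a b : A} (h : EdgeD D a b) : a ≠ b := by
  obtain ⟨P, hP, P', hP', hadj, h1, h2, h3, h4⟩ := h
  intro hab
  have h0 : rk P a = 0 := top_eq_iff.mp h1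
  rw [hab] at h0
  omega

lemma tcc_mem {P Q : Pref A} (hP : P ∈ D) (h : Q ∈ TCC D P) :
    Q ∈ D ∧ Pref.top Q = Pref.top P := by
  induction h with
  | refl => exact ⟨hP, rfl⟩
  | tail _ hstep ih => exact ⟨hstep.1.2.1, hstep.2.symm.trans ih.2⟩

lemma step_edge {P Q : Pref A} (h : StepRel D P Q) :
    Pref.top P = Pref.top Q ∨ EdgeD D (Pref.top P) (Pref.top Q) := by
  by_cases hne : Pref.top P = Pref.top Q
  · exact Or.inl hne
  · right
    obtain ⟨hd1, hd2⟩ := adj_difftop h.2.2 hne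
    exact ⟨P, h.1, Q, h.2.1, h.2.2, rfl, rfl, hd1, hd2⟩

lemma gconn (hmr : MinimallyRich D) (hdc : DConnected D) (a b : A) :
    ReflTransGen (EOE (EdgeD D)) a b := by
  obtain ⟨P, hP, htP⟩ := hmr a
  obtain ⟨Q, hQ, htQ⟩ := hmr b
  have key : ∀ R, ReflTransGen (StepRel D) P R →
      ReflTransGen (EOE (EdgeD D)) (Pref.top P) (Pref.top R) := by
    intro R h
    induction h with
    | refl => exact ReflTransGen.refl
    | tail _ hstep ih => exact ih.tail (step_edge hstep)
  have := key Q (hdc P hP Q hQ)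
  rwa [htP, htQ] at this

lemma gdeg (hmr : MinimallyRich D) (hcdn : CDN D) (a : A) :
    ∃ b c, b ≠ c ∧ EdgeD D a b ∧ EdgeD D a c := by
  obtain ⟨P, hP, htP⟩ := hmr a
  obtain ⟨Q, hQn, R, hRn, hQR⟩ := hcdn.2 P hP
  have key : ∀ S, S ∈ Nbr D (TCC D P) → EdgeD D a (Pref.top S) := by
    intro S hS
    obtain ⟨hSD, hSnot, P₁, hP₁, hadj⟩ := hS
    obtain ⟨hP₁D, htP₁⟩ := tcc_mem hP hP₁
    have htS : Pref.top P₁ ≠ Pref.top S := by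
      intro h
      exact hSnot (ReflTransGen.tail hP₁ ⟨⟨hP₁D, hSD, hadj⟩, h⟩)
    obtain ⟨hd1, hd2⟩ := adj_difftop hadj htS
    have hta : Pref.top P₁ = a := htP₁.trans htP
    rw [hta] at hd2
    exact ⟨P₁, hP₁D, S, hSD, hadj, hta, rfl, hd1, hd2⟩
  refine ⟨Pref.top Q, Pref.top R, hQR, key Q hQn, key R hRn⟩

lemma update0 {D : Set (Pref A)} (P Q P' : D) :
    Function.update (![P, Q]) (0 : Fin 2) P' = ![P', Q] := by
  funext i; fin_cases i <;> simp [Function.update]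

lemma update1 {D : Set (Pref A)} (P Q Q' : D) :
    Function.update (![P, Q]) (1 : Fin 2) Q' = ![P, Q'] := by
  funext i; fin_cases i <;> simp [Function.update]

end Stmt12Pref

open Stmt12Core Stmt12Pref in
/-- Lemmas 4 and 5: on a minimally rich domain connected with two distinct
neighbours, for every alternative some voter among 1 and 2 is decisive over it;
consequently the two-voter scf is dictatorial. -/
theorem stmt12 {A : Type*} [Fintype A] [Nonempty A] (hA : 3 ≤ Fintype.card A)
    (D : Set (Pref A)) (hmr : MinimallyRich D) (hcdn : CDN D)
    (f : (Fin 2 → D) → A)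
    (hu : Unanimous D f) (hto : TopsOnly D f) (hlsp : LocallySP D f) :
    (∀ a : A, Decisive D f 0 a ∨ Decisive D f 1 a) ∧ Dictatorial D f := by
  classical
  obtain ⟨pick, hD, hT⟩ : ∃ pick : A → Pref A, (∀ a, pick a ∈ D) ∧ ∀ a, Pref.top (pick a) = a := by
    choose pick h1 h2 using hmr
    exact ⟨pick, h1, h2⟩
  set Pa : A → D := fun a => ⟨pick a, hD a⟩ with hPa
  have heval2 : ∀ Pr : Fin 2 → D,
      f Pr = f ![Pa (Pref.top (Pr 0 : Pref A)), Pa (Pref.top (Pr 1 : Pref A))] := by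
    intro Pr
    apply hto
    intro i
    fin_cases i <;> simp [hPa, hT]
  have hdiag : ∀ a, f ![Pa a, Pa a] = a := by
    intro a
    apply hu
    intro i
    fin_cases i <;> simp [hPa, hT]
  have hevalg : ∀ (P : Pref A) (hP : P ∈ D) (t : A),
      f ![(⟨P, hP⟩ : D), Pa t] = f ![Pa (Pref.top P), Pa t] := by
    intro P hP t
    have := heval2 ![(⟨P, hP⟩ : D), Pa t]
    simpa [hPa, hT] using this
  have hevalg' : ∀ (s : A) (P : Pref A) (hP : P ∈ D),
      f ![Pa s, (⟨P, hP⟩ : D)] = f ![Pa s, Pa (Pref.top P)] := by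
    intro s P hP
    have := heval2 ![Pa s, (⟨P, hP⟩ : D)]
    simpa [hPa, hT] using this
  have hP2a : ∀ s s' t, EdgeD D s s' →
      f ![Pa s, Pa t] ≠ f ![Pa s', Pa t] →
      f ![Pa s, Pa t] = s ∧ f ![Pa s', Pa t] = s' := by
    intro s s' t hedge hgne
    obtain ⟨P, hP, P', hP', hadj, ht1, ht2, hr1, hr2⟩ := hedge
    have hx : f ![(⟨P, hP⟩ : D), Pa t] = f ![Pa s, Pa t] := by
      rw [hevalg P hP t, ht1]
    have hz : f ![(⟨P', hP'⟩ : D), Pa t] = f ![Pa s', Pa t] := by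
      rw [hevalg P' hP' t, ht2]
    have l1 := hlsp ![(⟨P, hP⟩ : D), Pa t] 0 ⟨P', hP'⟩ (by simpa using hadj)
    rw [update0] at l1
    have l1' : rk P (f ![(⟨P, hP⟩ : D), Pa t]) ≤ rk P (f ![(⟨P', hP'⟩ : D), Pa t]) := by
      have l1'' : ¬ (rk P (f ![(⟨P', hP'⟩ : D), Pa t]) < rk P (f ![(⟨P, hP⟩ : D), Pa t])) := by
        simpa [SPrefers] using l1
      omega
    have l2 := hlsp ![(⟨P', hP'⟩ : D), Pa t] 0 ⟨P, hP⟩ (by simpa using adj_symm hadj)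
    rw [update0] at l2
    have l2' : rk P' (f ![(⟨P', hP'⟩ : D), Pa t]) ≤ rk P' (f ![(⟨P, hP⟩ : D), Pa t]) := by
      have l2'' : ¬ (rk P' (f ![(⟨P, hP⟩ : D), Pa t]) < rk P' (f ![(⟨P', hP'⟩ : D), Pa t])) := by
        simpa [SPrefers] using l2
      omega
    have hxz : f ![(⟨P, hP⟩ : D), Pa t] ≠ f ![(⟨P', hP'⟩ : D), Pa t] := by
      rw [hx, hz]; exact hgne
    have := topswap hadj (top_eq_iff.mp ht1) hr1 (top_eq_iff.mp ht2) hr2 hxz l1' l2'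
    rw [← hx, ← hz]
    exact this
  have hP2b : ∀ s t t', EdgeD D t t' →
      f ![Pa s, Pa t] ≠ f ![Pa s, Pa t'] →
      f ![Pa s, Pa t] = t ∧ f ![Pa s, Pa t'] = t' := by
    intro s t t' hedge hgne
    obtain ⟨P, hP, P', hP', hadj, ht1, ht2, hr1, hr2⟩ := hedge
    have hx : f ![Pa s, (⟨P, hP⟩ : D)] = f ![Pa s, Pa t] := by
      rw [hevalg' s P hP, ht1]
    have hz : f ![Pa s, (⟨P', hP'⟩ : D)] = f ![Pa s, Pa t'] := by
      rw [hevalg' s P' hP', ht2]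
    have l1 := hlsp ![Pa s, (⟨P, hP⟩ : D)] 1 ⟨P', hP'⟩ (by simpa using hadj)
    rw [update1] at l1
    have l1' : rk P (f ![Pa s, (⟨P, hP⟩ : D)]) ≤ rk P (f ![Pa s, (⟨P', hP'⟩ : D)]) := by
      have l1'' : ¬ (rk P (f ![Pa s, (⟨P', hP'⟩ : D)]) < rk P (f ![Pa s, (⟨P, hP⟩ : D)])) := by
        simpa [SPrefers] using l1
      omega
    have l2 := hlsp ![Pa s, (⟨P', hP'⟩ : D)] 1 ⟨P, hP⟩ (by simpa using adj_symm hadj)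
    rw [update1] at l2
    have l2' : rk P' (f ![Pa s, (⟨P', hP'⟩ : D)]) ≤ rk P' (f ![Pa s, (⟨P, hP⟩ : D)]) := by
      have l2'' : ¬ (rk P' (f ![Pa s, (⟨P, hP⟩ : D)]) < rk P' (f ![Pa s, (⟨P', hP'⟩ : D)])) := by
        simpa [SPrefers] using l2
      omega
    have hxz : f ![Pa s, (⟨P, hP⟩ : D)] ≠ f ![Pa s, (⟨P', hP'⟩ : D)] := by
      rw [hx, hz]; exact hgne
    have := topswap hadj (top_eq_iff.mp ht1) hr1 (top_eq_iff.mp ht2) hr2 hxz l1' l2'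
    rw [← hx, ← hz]
    exact this
  have HC : CoreHyp (EdgeD D) (fun a b => f ![Pa a, Pa b]) :=
    { symm := fun a b h => edge_symm h
      ne := fun a b h => edge_ne h
      diag := hdiag
      p2a := hP2a
      p2b := hP2b
      conn := gconn hmr hcdn.1
      deg := gdeg hmr hcdn }
  rcases core_dict HC with hd | hd
  · have hdec : ∀ a, Decisive D f 0 a := by
      intro a Pr h0
      rw [heval2 Pr, h0]
      exact hd a _
    refine ⟨fun a => Or.inl (hdec a), 0, fun Pr => ?_⟩
    rw [heval2 Pr]
    exact hd _ _
  · have hdec : ∀ a, Decisive D f 1 a := by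
      intro a Pr h1
      rw [heval2 Pr, h1]
      exact hd _ a
    refine ⟨fun a => Or.inr (hdec a), 1, fun Pr => ?_⟩
    rw [heval2 Pr]
    exact hd _ _
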